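/- Let A be a commutative ℝ-algebra, let H be an ℝ-linear subspace of A, and let p ≥ 3 be an odd integer. Then the ℝ-linear span of H ∪ {ζ^p : ζ ∈ H} equals the ℝ-linear span of H ∪ {ζ₁ ⋅ … ⋅ ζ_p : ζ₁, …, ζ_p ∈ H}. -/
import Mathlib

open Finset

lemma inner_sum_eq {p : ℕ} (T : Finset (Fin p)) :
    ∑ S ∈ Finset.univ.filter (fun S : Finset (Fin p) => T ⊆ S), ((-1 : ℝ) ^ (p - S.card))
      = if T = Finset.univ then 1 else 0 := by
  have key : ∑ S ∈ Finset.univ.filter (fun S : Finset (Fin p) => T ⊆ S),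
      ((-1 : ℝ) ^ (p - S.card)) = ∑ U ∈ Tᶜ.powerset, ((-1 : ℝ) ^ U.card) := by
    refine Finset.sum_nbij' (fun S => Sᶜ) (fun U => Uᶜ) ?_ ?_ ?_ ?_ ?_
    · intro S hS
      simp only [mem_filter, mem_univ, true_and] at hS
      simpa [Finset.mem_powerset] using Finset.compl_subset_compl.mpr hS
    · intro U hU
      simp only [Finset.mem_powerset] at hU
      simp only [mem_filter, mem_univ, true_and]
      simpa using Finset.compl_subset_compl.mpr hU
    · intro S _; simp
    · intro U _; simp
    · intro S hS
      congr 1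
      rw [Finset.card_compl]
      simp
  rw [key]
  have := @Finset.sum_powerset_neg_one_pow_card (Fin p) _ Tᶜ
  have h2 : ((∑ m ∈ Tᶜ.powerset, (-1 : ℤ) ^ m.card : ℤ) : ℝ)
      = ∑ U ∈ Tᶜ.powerset, ((-1 : ℝ) ^ U.card) := by push_cast; ring_nf
  rw [← h2, this]
  by_cases h : T = Finset.univ
  · simp [h]
  · have : Tᶜ ≠ ∅ := by
      simpa [Finset.compl_eq_empty_iff] using h
    simp [h, this, Finset.compl_eq_empty_iff]

lemma polarization {A : Type*} [CommRing A] [Algebra ℝ A] (p : ℕ) (ζ : Fin p → A) :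
    ∑ S : Finset (Fin p), ((-1 : ℝ) ^ (p - S.card)) • (∑ i ∈ S, ζ i) ^ p
      = (p.factorial : ℝ) • ∏ i, ζ i := by
  classical
  have hexp : ∀ S : Finset (Fin p), (∑ i ∈ S, ζ i) ^ p
      = ∑ g ∈ Fintype.piFinset (fun _ : Fin p => S), ∏ j, ζ (g j) := by
    intro S
    rw [← Finset.prod_univ_sum]
    simp [Finset.prod_const]
  calc ∑ S : Finset (Fin p), ((-1 : ℝ) ^ (p - S.card)) • (∑ i ∈ S, ζ i) ^ p
      = ∑ S : Finset (Fin p), ∑ g ∈ Fintype.piFinset (fun _ : Fin p => S),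
          ((-1 : ℝ) ^ (p - S.card)) • ∏ j, ζ (g j) := by
        refine Finset.sum_congr rfl fun S _ => ?_
        rw [hexp, Finset.smul_sum]
    _ = ∑ g : Fin p → Fin p, ∑ S ∈ Finset.univ.filter
          (fun S : Finset (Fin p) => Finset.image g Finset.univ ⊆ S),
          ((-1 : ℝ) ^ (p - S.card)) • ∏ j, ζ (g j) := by
        refine Finset.sum_comm' fun S g => ?_
        simp [Fintype.mem_piFinset, Finset.image_subset_iff]
    _ = ∑ g : Fin p → Fin p,
          (if Finset.image g Finset.univ = Finset.univ then (1:ℝ) else 0) • ∏ j, ζ (g j) := by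
        refine Finset.sum_congr rfl fun g _ => ?_
        rw [← Finset.sum_smul, inner_sum_eq]
    _ = ∑ g ∈ Finset.univ.filter
          (fun g : Fin p → Fin p => Function.Bijective g), ∏ j, ζ (g j) := by
        rw [Finset.sum_filter]
        refine Finset.sum_congr rfl fun g _ => ?_
        have : Finset.image g Finset.univ = Finset.univ ↔ Function.Bijective g := by
          rw [Finset.eq_univ_iff_forall]
          constructor
          · intro h
            refine Finite.surjective_iff_bijective.mp fun y => ?_
            simpa using h y
          · intro h y
            simpa using h.surjective y
        by_cases hb : Function.Bijective g <;> simp [this, hb]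
    _ = ∑ σ : Equiv.Perm (Fin p), ∏ j, ζ (σ j) := by
        refine (Finset.sum_bij' (fun (g : Fin p → Fin p)
            (hg : g ∈ Finset.univ.filter fun g => Function.Bijective g) =>
            Equiv.ofBijective g (by simpa using hg))
          (fun (σ : Equiv.Perm (Fin p)) _ => ⇑σ) ?_ ?_ ?_ ?_ ?_)
        · intro g hg; simp
        · intro σ _; exact Finset.mem_filter.mpr ⟨Finset.mem_univ _, σ.bijective⟩
        · intro g hg; rfl
        · intro σ _; ext x; simp [Equiv.ofBijective]
        · intro g hg; rfl
    _ = (p.factorial : ℝ) • ∏ i, ζ i := by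
        have : ∀ σ : Equiv.Perm (Fin p), ∏ j, ζ (σ j) = ∏ i, ζ i := fun σ =>
          Equiv.prod_comp σ ζ
        rw [Finset.sum_congr rfl fun σ _ => this σ, Finset.sum_const,
          Finset.card_univ, Fintype.card_perm, Fintype.card_fin]
        simp [← Nat.cast_smul_eq_nsmul ℝ]


/-- For odd `p ≥ 3`, the ℝ-linear span of `H ∪ {ζ^p : ζ ∈ H}` equals the
ℝ-linear span of `H ∪ {ζ₁ ⋯ ζ_p : ζ₁, …, ζ_p ∈ H}`. -/
theorem span_pow_eq_span_prod (A : Type*) [CommRing A] [Algebra ℝ A]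
    (H : Submodule ℝ A) (p : ℕ) (hp : 3 ≤ p) (hodd : Odd p) :
    Submodule.span ℝ ((H : Set A) ∪ {x : A | ∃ z ∈ H, x = z ^ p}) =
      Submodule.span ℝ ((H : Set A) ∪
        {x : A | ∃ ζ : Fin p → A, (∀ i, ζ i ∈ H) ∧ x = ∏ i, ζ i}) := by
  apply le_antisymm
  · apply Submodule.span_mono
    apply Set.union_subset_union_right
    rintro x ⟨z, hz, rfl⟩
    exact ⟨fun _ => z, fun _ => hz, by simp⟩
  · rw [Submodule.span_le]
    rintro x (hx | ⟨ζ, hζ, rfl⟩)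
    · exact Submodule.subset_span (Set.mem_union_left _ hx)
    · have key := polarization p ζ
      have hfac : (p.factorial : ℝ) ≠ 0 := by
        exact_mod_cast Nat.factorial_ne_zero p
      have : (∏ i, ζ i) = (p.factorial : ℝ)⁻¹ •
          ∑ S : Finset (Fin p), ((-1 : ℝ) ^ (p - S.card)) • (∑ i ∈ S, ζ i) ^ p := by
        rw [key, smul_smul, inv_mul_cancel₀ hfac, one_smul]
      rw [this]
      refine Submodule.smul_mem _ _ (Submodule.sum_mem _ fun S _ => Submodule.smul_mem _ _ ?_)
      exact Submodule.subset_span (Set.mem_union_right _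
        ⟨∑ i ∈ S, ζ i, Submodule.sum_mem _ fun i _ => hζ i, rfl⟩)
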